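/- (Triangle inequality for the diagonal distance cases) Let a, b, c be anchors with a ≺ b and b ≺ c, such that a and b overlap in at least one coordinate, b and c overlap in at least one coordinate, and a and c overlap in at least one coordinate (where anchors x = ([q_s..q_e],[t_s..t_e]) and x' = ([q_s'..q_e'],[t_s'..t_e']) overlap in the first coordinate if q_e ≥ q_s' and in the second if t_e ≥ t_s'). Then connect(a,b) + connect(b,c) ≥ connect(a,c). -/
import Mathlib


/-- An anchor: a pair of integer intervals `([qs..qe],[ts..te])`. -/
structure Anchor where
  qs : ℤ
  qe : ℤ
  ts : ℤ
  te : ℤ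
deriving DecidableEq

/-- `a` is a well-formed anchor: nonempty intervals satisfying the
    exact-match invariant `qe - qs = te - ts`. -/
def Anchor.Valid (a : Anchor) : Prop :=
  a.qs ≤ a.qe ∧ a.ts ≤ a.te ∧ a.qe - a.qs = a.te - a.ts

/-- Strict precedence `a ≺ a'`. -/
def strictPrec (a a' : Anchor) : Prop :=
  a.qs ≤ a'.qs ∧ a.qe ≤ a'.qe ∧ a.ts ≤ a'.ts ∧ a.te ≤ a'.te ∧
    (a.qs < a'.qs ∨ a.qe < a'.qe ∨ a.ts < a'.ts ∨ a.te < a'.te)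

/-- Weak precedence `a ≺_w a'`. -/
def weakPrec (a a' : Anchor) : Prop :=
  a.qs ≤ a'.qs ∧ a.ts ≤ a'.ts ∧ (a.qs < a'.qs ∨ a.ts < a'.ts)

/-- Strong (ChainX) precedence `a ≺_X a'`. -/
def chainxPrec (a a' : Anchor) : Prop :=
  a.qs < a'.qs ∧ a.qe < a'.qe ∧ a.ts < a'.ts ∧ a.te < a'.te

/-- Gap cost `gap(a,a') = max(0, qs' - qe - 1, ts' - te - 1)`. -/
def gapCost (a a' : Anchor) : ℤ :=
  max 0 (max (a'.qs - a.qe - 1) (a'.ts - a.te - 1))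

/-- Overlap cost `o(a,a') = |max(0, qe - qs' + 1) - max(0, te - ts' + 1)|`. -/
def ovCost (a a' : Anchor) : ℤ :=
  |max 0 (a.qe - a'.qs + 1) - max 0 (a.te - a'.ts + 1)|

/-- `connect(a,a') = gap(a,a') + o(a,a')`. -/
def connectCost (a a' : Anchor) : ℤ := gapCost a a' + ovCost a a'

/-- The diagonal of an anchor: `diag(a) = qs - ts`. -/
def Anchor.diag (a : Anchor) : ℤ := a.qs - a.ts


lemma connect_eq_diag_dist (a b : Anchor) (ha : a.Valid) (hb : b.Valid)
    (hov : b.qs ≤ a.qe ∨ b.ts ≤ a.te) :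
    connectCost a b = |a.diag - b.diag| := by
  obtain ⟨h1,h2,h3⟩ := ha
  obtain ⟨h4,h5,h6⟩ := hb
  simp only [connectCost, gapCost, ovCost, Anchor.diag]
  rcases abs_cases (0 ⊔ (a.qe - b.qs + 1) - 0 ⊔ (a.te - b.ts + 1)) with ⟨e1,s1⟩|⟨e1,s1⟩ <;>
  rcases abs_cases (a.qs - a.ts - (b.qs - b.ts)) with ⟨e2,s2⟩|⟨e2,s2⟩ <;>
  rw [e1,e2] <;> omega

/-- Triangle inequality for the diagonal distance cases. -/
theorem connect_triangle_of_overlaps (a b c : Anchor)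
    (ha : a.Valid) (hb : b.Valid) (hc : c.Valid)
    (hab : strictPrec a b) (hbc : strictPrec b c)
    (hov_ab : b.qs ≤ a.qe ∨ b.ts ≤ a.te)
    (hov_bc : c.qs ≤ b.qe ∨ c.ts ≤ b.te)
    (hov_ac : c.qs ≤ a.qe ∨ c.ts ≤ a.te) :
    connectCost a b + connectCost b c ≥ connectCost a c := by
  rw [connect_eq_diag_dist a b ha hb hov_ab, connect_eq_diag_dist b c hb hc hov_bc,
    connect_eq_diag_dist a c ha hc hov_ac]
  exact abs_sub_le a.diag b.diag c.diag
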